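/- Let μ be a capacity on a finite set G with Möbius representation m. Then for all distinct g_i, g_j ∈ G, the interaction index of the pair {g_i, g_j} equals its Möbius expression: Σ_{T ⊆ G∖{g_i,g_j}} [(|G∖T|−2)! · |T|! / (|G|−1)!] · (μ(T∪{g_i,g_j}) − μ(T∪{g_i}) − μ(T∪{g_j}) + μ(T)) = Σ_{A : {g_i,g_j} ⊆ A ⊆ G} m(A)/(|A|−1). -/

import Mathlib

lemma hockey (M b : ℕ) :
    ∑ k ∈ Finset.range (M+1), (b+k).choose b = (M+b+1).choose (b+1) := by
  induction M with
  | zero => simp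
  | succ M ih =>
    rw [Finset.sum_range_succ, ih]
    have : M+1+b+1 = (M+b+1)+1 := by ring
    rw [this, Nat.choose_succ_succ (M+b+1) b]
    have : b + (M+1) = M+b+1 := by ring
    rw [this]
    simp [Nat.succ_eq_add_one, Nat.add_comm]

lemma keyNat (M b : ℕ) :
    (b+1) * ∑ k ∈ Finset.range (M+1),
      M.choose k * ((M-k).factorial * (b+k).factorial)
      = (M+b+1).factorial := by
  have : ∀ k ∈ Finset.range (M+1),
      M.choose k * ((M-k).factorial * (b+k).factorial)
        = M.factorial * b.factorial * (b+k).choose b := by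
    intro k hk
    rw [Finset.mem_range] at hk
    have hk' : k ≤ M := by omega
    have h1 : M.choose k * k.factorial * (M-k).factorial = M.factorial :=
      Nat.choose_mul_factorial_mul_factorial hk'
    have h2 : (b+k).choose b * b.factorial * k.factorial = (b+k).factorial := by
      have := Nat.choose_mul_factorial_mul_factorial (Nat.le_add_right b k)
      simpa using this
    calc M.choose k * ((M-k).factorial * (b+k).factorial)
        = M.choose k * ((M-k).factorial * ((b+k).choose b * b.factorial * k.factorial)) := by
          rw [h2]
      _ = (M.choose k * k.factorial * (M-k).factorial) * (b.factorial * (b+k).choose b) := by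
          ring
      _ = M.factorial * (b.factorial * (b+k).choose b) := by rw [h1]
      _ = M.factorial * b.factorial * (b+k).choose b := by ring
  rw [Finset.sum_congr rfl this, ← Finset.mul_sum, hockey]
  have h3 : (M+b+1).choose (b+1) * (b+1).factorial * M.factorial = (M+b+1).factorial := by
    have hle : b+1 ≤ M+b+1 := by omega
    have := Nat.choose_mul_factorial_mul_factorial hle
    have he : M+b+1-(b+1) = M := by omega
    rw [he] at this
    exact this
  calc (b+1) * (M.factorial * b.factorial * (M+b+1).choose (b+1))
      = (M+b+1).choose (b+1) * ((b+1) * b.factorial) * M.factorial := by ring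
    _ = (M+b+1).choose (b+1) * (b+1).factorial * M.factorial := by rw [Nat.factorial_succ]
    _ = (M+b+1).factorial := h3

lemma keyReal (M b : ℕ) :
    ∑ k ∈ Finset.range (M+1),
      (M.choose k : ℝ) * ((M-k).factorial * (b+k).factorial) / ((M+b+1).factorial)
      = 1/(b+1) := by
  have hfac : ((M+b+1).factorial : ℝ) ≠ 0 := Nat.cast_ne_zero.2 (Nat.factorial_ne_zero _)
  have hb : ((b:ℝ)+1) ≠ 0 := by positivity
  rw [← Finset.sum_div, div_eq_div_iff hfac hb]
  push_cast [← keyNat M b]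
  ring

lemma coeffSum {ι : Type*} [DecidableEq ι] (s B : Finset ι) (hB : B ⊆ s)
    (n : ℕ) (hn : s.card + 2 = n) :
    ∑ T ∈ s.powerset.filter (fun T => B ⊆ T),
      (((n - T.card - 2).factorial * T.card.factorial : ℕ) : ℝ)
        / ((n-1).factorial : ℝ)
      = 1/((B.card : ℝ)+1) := by
  set b := B.card with hb
  set M := (s \ B).card with hM
  have hMb : M + b = s.card := by
    rw [hM, hb, Finset.card_sdiff_of_subset hB]
    have := Finset.card_le_card hB
    omega
  have h1 : ∑ T ∈ s.powerset.filter (fun T => B ⊆ T),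
      (((n - T.card - 2).factorial * T.card.factorial : ℕ) : ℝ) / ((n-1).factorial : ℝ)
      = ∑ C ∈ (s \ B).powerset,
      (((n - (b + C.card) - 2).factorial * (b + C.card).factorial : ℕ) : ℝ)
        / ((n-1).factorial : ℝ) := by
    apply Finset.sum_nbij' (fun T => T \ B) (fun C => B ∪ C)
    · intro T hT
      simp only [Finset.mem_filter, Finset.mem_powerset] at hT
      exact Finset.mem_powerset.2 (Finset.sdiff_subset_sdiff hT.1 le_rfl)
    · intro C hC
      simp only [Finset.mem_powerset] at hC
      refine Finset.mem_filter.2 ⟨Finset.mem_powerset.2 ?_, Finset.subset_union_left⟩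
      exact Finset.union_subset hB (hC.trans (Finset.sdiff_subset))
    · intro T hT
      simp only [Finset.mem_filter, Finset.mem_powerset] at hT
      exact Finset.union_sdiff_of_subset hT.2
    · intro C hC
      simp only [Finset.mem_powerset] at hC
      exact Finset.union_sdiff_cancel_left
        (Finset.disjoint_of_subset_right hC Finset.disjoint_sdiff)
    · intro T hT
      simp only [Finset.mem_filter, Finset.mem_powerset] at hT
      have hcard : b + (T \ B).card = T.card := by
        rw [Finset.card_sdiff_of_subset hT.2]
        have := Finset.card_le_card hT.2
        omega
      rw [hcard]
  rw [h1, Finset.sum_powerset_apply_card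
    (f := fun k => (((n - (b + k) - 2).factorial * (b + k).factorial : ℕ) : ℝ)
        / ((n-1).factorial : ℝ)) (x := s \ B), ← hM]
  have hrw : ∀ k ∈ Finset.range (M+1),
      (M.choose k) • ((((n - (b + k) - 2).factorial * (b + k).factorial : ℕ) : ℝ)
        / ((n-1).factorial : ℝ))
      = (M.choose k : ℝ) * ((M-k).factorial * (b+k).factorial) / ((M+b+1).factorial) := by
    intro k hk
    rw [Finset.mem_range] at hk
    have e1 : n - (b + k) - 2 = M - k := by omega
    have e2 : n - 1 = M + b + 1 := by omega
    rw [e1, e2, nsmul_eq_mul]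
    push_cast
    ring
  rw [Finset.sum_congr rfl hrw, keyReal]

lemma deltaEq {ι : Type*} [DecidableEq ι] (μ m : Finset ι → ℝ)
    (hm : ∀ S : Finset ι, μ S = ∑ R ∈ S.powerset, m R)
    (i j : ι) (hij : i ≠ j) (T : Finset ι) (hiT : i ∉ T) (hjT : j ∉ T) :
    μ (insert i (insert j T)) - μ (insert i T) - μ (insert j T) + μ T
      = ∑ B ∈ T.powerset, m (insert i (insert j B)) := by
  have hiT' : i ∉ insert j T := by simp [hij, hiT]
  rw [hm, hm, hm, hm,
    Finset.sum_powerset_insert hiT', Finset.sum_powerset_insert hjT,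
    Finset.sum_powerset_insert hiT, Finset.sum_powerset_insert hjT]
  ring

/-- The interaction index of a pair of distinct criteria `i, j` w.r.t. a set function `μ`:
`∑_{T ⊆ G∖{i,j}} [(|G∖T|−2)! |T|! / (|G|−1)!] (μ(T∪{i,j}) − μ(T∪{i}) − μ(T∪{j}) + μ(T))`. -/
noncomputable def interactionIndex {ι : Type*} [Fintype ι] [DecidableEq ι]
    (μ : Finset ι → ℝ) (i j : ι) : ℝ :=
  ∑ T ∈ ((Finset.univ.erase i).erase j).powerset,
    (((Finset.univ \ T).card - 2).factorial * T.card.factorial : ℝ)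
      / ((Fintype.card ι - 1).factorial : ℝ)
      * (μ (insert i (insert j T)) - μ (insert i T) - μ (insert j T) + μ T)

/-- the interaction index of `{g_i, g_j}` equals
`∑_{A : {g_i,g_j} ⊆ A ⊆ G} m(A)/(|A|−1)`. -/
theorem interactionIndex_eq_mobius_expr {ι : Type*} [Fintype ι] [DecidableEq ι]
    (μ m : Finset ι → ℝ)
    (h0 : μ ∅ = 0) (h1 : μ Finset.univ = 1)
    (hmono : ∀ R S : Finset ι, R ⊆ S → μ R ≤ μ S)
    (hm : ∀ S : Finset ι, μ S = ∑ R ∈ S.powerset, m R)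
    (i j : ι) (hij : i ≠ j) :
    interactionIndex μ i j
      = ∑ A ∈ Finset.univ.powerset.filter (fun A : Finset ι => i ∈ A ∧ j ∈ A),
          m A / ((A.card : ℝ) - 1) := by
  classical
  set n := Fintype.card ι with hn
  set s := ((Finset.univ.erase i).erase j : Finset ι) with hs
  have hjmem : j ∈ (Finset.univ.erase i : Finset ι) :=
    Finset.mem_erase.2 ⟨hij.symm, Finset.mem_univ j⟩
  have hscard : s.card + 2 = n := by
    rw [hs, Finset.card_erase_of_mem hjmem,
      Finset.card_erase_of_mem (Finset.mem_univ i), Finset.card_univ, ← hn]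
    have h2n : 2 ≤ n := by
      have hle : ({i, j} : Finset ι).card ≤ Fintype.card ι := by
        rw [← Finset.card_univ]; exact Finset.card_le_univ _
      rw [Finset.card_insert_of_notMem (by simpa using hij),
        Finset.card_singleton] at hle
      omega
    omega
  have his : i ∉ s := by simp [hs]
  have hjs : j ∉ s := by simp [hs]
  -- rewrite the interaction index
  have step1 : interactionIndex μ i j
      = ∑ T ∈ s.powerset, ∑ B ∈ T.powerset,
          (((n - T.card - 2).factorial * T.card.factorial : ℕ) : ℝ)
            / ((n-1).factorial : ℝ) * m (insert i (insert j B)) := by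
    unfold interactionIndex
    refine Finset.sum_congr rfl ?_
    intro T hT
    rw [Finset.mem_powerset] at hT
    have hiT : i ∉ T := fun h => his (hT h)
    have hjT : j ∉ T := fun h => hjs (hT h)
    rw [deltaEq μ m hm i j hij T hiT hjT, Finset.mul_sum]
    have hcard : (Finset.univ \ T).card = n - T.card := by
      rw [Finset.card_sdiff_of_subset (Finset.subset_univ T), Finset.card_univ]
    rw [hcard]
    push_cast
    ring_nf
    rw [← hn]
  -- swap the two sums
  have step2 : ∑ T ∈ s.powerset, ∑ B ∈ T.powerset,
          (((n - T.card - 2).factorial * T.card.factorial : ℕ) : ℝ)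
            / ((n-1).factorial : ℝ) * m (insert i (insert j B))
      = ∑ B ∈ s.powerset, ∑ T ∈ s.powerset.filter (fun T => B ⊆ T),
          (((n - T.card - 2).factorial * T.card.factorial : ℕ) : ℝ)
            / ((n-1).factorial : ℝ) * m (insert i (insert j B)) := by
    have hpow : ∀ T ∈ s.powerset, T.powerset = s.powerset.filter (fun B => B ⊆ T) := by
      intro T hT
      rw [Finset.mem_powerset] at hT
      ext B
      simp only [Finset.mem_powerset, Finset.mem_filter]
      exact ⟨fun h => ⟨h.trans hT, h⟩, fun h => h.2⟩
    rw [Finset.sum_congr rfl fun T hT => by rw [hpow T hT]]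
    simp_rw [Finset.sum_filter]
    exact Finset.sum_comm
  -- evaluate inner sum via coeffSum
  have step3 : ∀ B ∈ s.powerset,
      ∑ T ∈ s.powerset.filter (fun T => B ⊆ T),
          (((n - T.card - 2).factorial * T.card.factorial : ℕ) : ℝ)
            / ((n-1).factorial : ℝ) * m (insert i (insert j B))
      = m (insert i (insert j B)) / ((B.card : ℝ) + 1) := by
    intro B hB
    rw [Finset.mem_powerset] at hB
    rw [← Finset.sum_mul, coeffSum s B hB n hscard]
    ring
  rw [step1, step2, Finset.sum_congr rfl step3]
  -- reindex the RHS
  symm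
  apply Finset.sum_nbij' (fun A => (A.erase i).erase j) (fun B => insert i (insert j B))
  · intro A hA
    simp only [Finset.mem_filter, Finset.mem_powerset] at hA
    rw [Finset.mem_powerset, hs]
    exact Finset.erase_subset_erase j (Finset.erase_subset_erase i (Finset.subset_univ A))
  · intro B hB
    simp only [Finset.mem_filter, Finset.mem_powerset]
    exact ⟨Finset.subset_univ _, Finset.mem_insert_self i _,
      Finset.mem_insert_of_mem (Finset.mem_insert_self j _)⟩
  · intro A hA
    simp only [Finset.mem_filter, Finset.mem_powerset] at hA
    rw [Finset.insert_erase (Finset.mem_erase.2 ⟨hij.symm, hA.2.2⟩), Finset.insert_erase hA.2.1]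
  · intro B hB
    rw [Finset.mem_powerset] at hB
    have hiB : i ∉ B := fun h => his (hB h)
    have hjB : j ∉ B := fun h => hjs (hB h)
    rw [Finset.erase_insert (by simp [hij, hiB]), Finset.erase_insert hjB]
  · intro A hA
    simp only [Finset.mem_filter, Finset.mem_powerset] at hA
    have hiA' : i ∈ A.erase i → False := by simp
    have hcard : ((A.erase i).erase j).card + 2 = A.card := by
      rw [Finset.card_erase_of_mem (Finset.mem_erase.2 ⟨hij.symm, hA.2.2⟩),
        Finset.card_erase_of_mem hA.2.1]
      have h1 : 1 ≤ A.card := Finset.card_pos.2 ⟨i, hA.2.1⟩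
      have h2 : 2 ≤ A.card := by
        have := Finset.card_le_card (show ({i,j} : Finset ι) ⊆ A by
          intro x hx; simp only [Finset.mem_insert, Finset.mem_singleton] at hx
          rcases hx with rfl | rfl; exacts [hA.2.1, hA.2.2])
        rwa [Finset.card_insert_of_notMem (by simpa using hij),
          Finset.card_singleton] at this
      omega
    have : ((((A.erase i).erase j).card : ℝ) + 1) = (A.card : ℝ) - 1 := by
      have : (A.card : ℝ) = ((A.erase i).erase j).card + 2 := by
        exact_mod_cast hcard.symm
      rw [this]; ring
    rw [this]
    congr 1
    rw [Finset.insert_erase (Finset.mem_erase.2 ⟨hij.symm, hA.2.2⟩), Finset.insert_erase hA.2.1]
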